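/- Let Γ be a finite set of LTL formulas over AP, let cl(Γ) be the set consisting of the subformulas of the formulas of Γ and their negations (identifying ¬¬θ with θ), with AP ⊆ cl(Γ), and let AP_Γ extend AP with a fresh proposition at(θ) for each θ ∈ cl(Γ)∖AP, setting at(p) := p for p ∈ AP. Then there exists a finite NBA A_Γ over the alphabet 2^{AP_Γ} such that: (1) for every w ∈ L(A_Γ), every i ≥ 0 and every θ ∈ cl(Γ), at(θ) ∈ w(i) if and only if ((w)_AP, i) ⊨ θ; and (2) for every trace π over AP there exists w ∈ L(A_Γ) with (w)_AP = π. Here (w)_AP denotes the pointwise projection of w onto AP. -/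

import Mathlib

set_option linter.unusedVariables false

open Classical

/-- A trace over a set `AP` of atomic propositions: an infinite word over `2^AP`. -/
abbrev Trace (AP : Type) : Type := ℕ → Set AP

/-- Syntax of LTL formulas over `AP` (with `⊤`). -/
inductive LTL (AP : Type) : Type where
  | tt   : LTL AP
  | atom : AP → LTL AP
  | neg  : LTL AP → LTL AP
  | conj : LTL AP → LTL AP → LTL AP
  | next : LTL AP → LTL AP
  | untl : LTL AP → LTL AP → LTL AP
deriving DecidableEq

namespace LTL

/-- Satisfaction of an LTL formula on a pointed trace. -/
def Sat {AP : Type} : LTL AP → Trace AP → ℕ → Prop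
  | tt, _, _ => True
  | atom p, π, i => p ∈ π i
  | neg θ, π, i => ¬ Sat θ π i
  | conj θ₁ θ₂, π, i => Sat θ₁ π i ∧ Sat θ₂ π i
  | next θ, π, i => Sat θ π (i + 1)
  | untl θ₁ θ₂, π, i => ∃ j, i ≤ j ∧ Sat θ₂ π j ∧ ∀ k, i ≤ k → k < j → Sat θ₁ π k

def or {AP : Type} (a b : LTL AP) : LTL AP := neg (conj (neg a) (neg b))
def impl {AP : Type} (a b : LTL AP) : LTL AP := or (neg a) b
def iff {AP : Type} (a b : LTL AP) : LTL AP := conj (impl a b) (impl b a)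
def ev {AP : Type} (a : LTL AP) : LTL AP := untl tt a
def alw {AP : Type} (a : LTL AP) : LTL AP := neg (ev (neg a))

def bigConj {AP : Type} : List (LTL AP) → LTL AP
  | [] => tt
  | θ :: l => conj θ (bigConj l)

def bigDisj {AP : Type} : List (LTL AP) → LTL AP
  | [] => neg tt
  | θ :: l => or θ (bigDisj l)

/-- The subformulas of an LTL formula. -/
def subf {AP : Type} [DecidableEq AP] : LTL AP → Finset (LTL AP)
  | tt => {tt}
  | atom p => {atom p}
  | neg θ => insert (neg θ) (subf θ)
  | conj a b => insert (conj a b) (subf a ∪ subf b)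
  | next θ => insert (next θ) (subf θ)
  | untl a b => insert (untl a b) (subf a ∪ subf b)

/-- Negation, identifying `¬¬θ` with `θ`. -/
def negId {AP : Type} : LTL AP → LTL AP
  | neg θ => θ
  | θ => neg θ

end LTL

/-- The closure of a finite set of LTL formulas: all subformulas and their
negations (identifying `¬¬θ` with `θ`). -/
def clOf {AP : Type} [DecidableEq AP] (Γ : Finset (LTL AP)) : Finset (LTL AP) :=
  (Γ.biUnion LTL.subf) ∪ (Γ.biUnion LTL.subf).image LTL.negId

/-- Positions `h` and `k` of `π` disagree on the truth value of some formula of `Γ`. -/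
def profDiff {AP : Type} (Γ : Set (LTL AP)) (π : Trace AP) (h k : ℕ) : Prop :=
  ∃ θ ∈ Γ, ¬ (LTL.Sat θ π h ↔ LTL.Sat θ π k)

/-- `IsStutterFact Γ π m f` : the increasing sequence of positions `f 0, f 1, …`
(of length `m + 1`, where `m ∈ ℕ∪{∞}`) is the Γ-stutter factorization of `π`:
`f 0 = 0`; the sequence is strictly increasing (below `m`); the truth value of every
formula of `Γ` is constant on each segment `[f j, f (j+1))` for `j < m` and on the
final infinite segment `[f m, ∞)` when `m` is finite; and between two adjacent
segments the truth value of some formula of `Γ` changes. -/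
def IsStutterFact {AP : Type} (Γ : Set (LTL AP)) (π : Trace AP) (m : ℕ∞) (f : ℕ → ℕ) : Prop :=
  f 0 = 0 ∧
  (∀ j : ℕ, (j : ℕ∞) < m → f j < f (j + 1)) ∧
  (∀ j : ℕ, (j : ℕ∞) < m → ∀ θ ∈ Γ, ∀ h k : ℕ,
      f j ≤ h → h < f (j + 1) → f j ≤ k → k < f (j + 1) →
      (LTL.Sat θ π h ↔ LTL.Sat θ π k)) ∧
  (∀ mf : ℕ, m = (mf : ℕ∞) → ∀ θ ∈ Γ, ∀ h k : ℕ,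
      f mf ≤ h → f mf ≤ k → (LTL.Sat θ π h ↔ LTL.Sat θ π k)) ∧
  (∀ j : ℕ, (j : ℕ∞) < m → ∃ θ ∈ Γ, (LTL.Sat θ π (f j) ↔ ¬ LTL.Sat θ π (f (j + 1))))

/-- The position component of the Γ-successor `succ_Γ(π, i)` of a pointed trace:
the first position of the segment (of the Γ-stutter factorization of `π`)
following the one containing `i`, if it exists, and `i + 1` otherwise. -/
noncomputable def succPos {AP : Type} (Γ : Set (LTL AP)) (π : Trace AP) (i : ℕ) : ℕ :=
  if h : ∃ j, i < j ∧ profDiff Γ π i j then Nat.find h else i + 1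

/-- The sequence of positions of `π` selected by the Γ-stutter trace of `π`. -/
noncomputable def stfrNth {AP : Type} (Γ : Set (LTL AP)) (π : Trace AP) : ℕ → ℕ
  | 0 => 0
  | k + 1 => succPos Γ π (stfrNth Γ π k)

/-- The Γ-stutter trace `stfr_Γ(π)` of `π`. -/
noncomputable def stfr {AP : Type} (Γ : Set (LTL AP)) (π : Trace AP) : Trace AP :=
  fun k => π (stfrNth Γ π k)

/-- Syntax of LTL_S: LTL with stutter-relativized temporal modalities. -/
inductive LTLS (AP : Type) : Type where
  | tt    : LTLS AP
  | atom  : AP → LTLS AP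
  | neg   : LTLS AP → LTLS AP
  | conj  : LTLS AP → LTLS AP → LTLS AP
  | nextR : Finset (LTL AP) → LTLS AP → LTLS AP
  | untlR : Finset (LTL AP) → LTLS AP → LTLS AP → LTLS AP

/-- Satisfaction of an LTL_S formula on a pointed trace. -/
def LTLS.Sat {AP : Type} : LTLS AP → Trace AP → ℕ → Prop
  | .tt, _, _ => True
  | .atom p, π, i => p ∈ π i
  | .neg ψ, π, i => ¬ LTLS.Sat ψ π i
  | .conj a b, π, i => LTLS.Sat a π i ∧ LTLS.Sat b π i
  | .nextR Γ ψ, π, i => LTLS.Sat ψ π (succPos (↑Γ) π i)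
  | .untlR Γ a b, π, i => ∃ j : ℕ,
      LTLS.Sat b π ((succPos (↑Γ : Set (LTL AP)) π)^[j] i) ∧
      ∀ k < j, LTLS.Sat a π ((succPos (↑Γ : Set (LTL AP)) π)^[k] i)

/-- A pointed trace assignment: maps each trace variable to a pointed trace. -/
abbrev PTA (AP V : Type) : Type := V → Trace AP × ℕ

/-- The Γ-successor of a pointed trace assignment. -/
noncomputable def succA {AP V : Type} (Γ : Set (LTL AP)) (Δ : PTA AP V) : PTA AP V :=
  fun x => ((Δ x).1, succPos Γ (Δ x).1 (Δ x).2)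

/-- Quantifier-free HyperLTL_S formulas over propositions `AP` and trace variables `V`. -/
inductive HSQF (AP V : Type) : Type where
  | tt    : HSQF AP V
  | atom  : AP → V → HSQF AP V
  | neg   : HSQF AP V → HSQF AP V
  | conj  : HSQF AP V → HSQF AP V → HSQF AP V
  | nextR : Finset (LTL AP) → HSQF AP V → HSQF AP V
  | untlR : Finset (LTL AP) → HSQF AP V → HSQF AP V → HSQF AP V

namespace HSQF

/-- Satisfaction of a quantifier-free HyperLTL_S formula on a pointed trace assignment. -/
def Sat {AP V : Type} : HSQF AP V → PTA AP V → Prop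
  | tt, _ => True
  | atom p x, Δ => p ∈ (Δ x).1 (Δ x).2
  | neg ψ, Δ => ¬ Sat ψ Δ
  | conj a b, Δ => Sat a Δ ∧ Sat b Δ
  | nextR Γ ψ, Δ => Sat ψ (succA (↑Γ) Δ)
  | untlR Γ a b, Δ => ∃ i : ℕ,
      Sat b ((succA (↑Γ : Set (LTL AP)))^[i] Δ) ∧
      ∀ k < i, Sat a ((succA (↑Γ : Set (LTL AP)))^[k] Δ)

/-- Trace variables occurring in a quantifier-free HyperLTL_S formula. -/
def vars {AP V : Type} : HSQF AP V → Set V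
  | tt => ∅
  | atom _ x => {x}
  | neg ψ => vars ψ
  | conj a b => vars a ∪ vars b
  | nextR _ ψ => vars ψ
  | untlR _ a b => vars a ∪ vars b

/-- The subscripts of the temporal modalities occurring in a formula. -/
def subs {AP V : Type} : HSQF AP V → Set (Finset (LTL AP))
  | tt => ∅
  | atom _ _ => ∅
  | neg ψ => subs ψ
  | conj a b => subs a ∪ subs b
  | nextR Γ ψ => insert Γ (subs ψ)
  | untlR Γ a b => insert Γ (subs a ∪ subs b)

/-- `ψ` is in the fragment HyperLTL_S[Γ]: every modality subscript equals `Γ`. -/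
def InFragment {AP V : Type} (Γ : Finset (LTL AP)) (ψ : HSQF AP V) : Prop :=
  ∀ s ∈ ψ.subs, s = Γ

/-- `ψ` is a one-variable formula. -/
def OneVar {AP V : Type} (ψ : HSQF AP V) : Prop := ∃ x : V, ψ.vars ⊆ {x}

/-- Replace every modality subscript by `∅`, yielding a HyperLTL formula. -/
def toHLTL {AP V : Type} : HSQF AP V → HSQF AP V
  | tt => tt
  | atom p x => atom p x
  | neg ψ => neg (toHLTL ψ)
  | conj a b => conj (toHLTL a) (toHLTL b)
  | nextR _ ψ => nextR ∅ (toHLTL ψ)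
  | untlR _ a b => untlR ∅ (toHLTL a) (toHLTL b)

end HSQF

/-- Boolean combinations of formulas satisfying a base predicate. -/
inductive BoolCombOf {AP V : Type} (P : HSQF AP V → Prop) : HSQF AP V → Prop
  | base {ψ} : P ψ → BoolCombOf P ψ
  | tt : BoolCombOf P .tt
  | neg {ψ} : BoolCombOf P ψ → BoolCombOf P (.neg ψ)
  | conj {a b} : BoolCombOf P a → BoolCombOf P b → BoolCombOf P (.conj a b)

/-- Trace quantifiers. -/
inductive Quant : Type where
  | ex  : Quant
  | all : Quant
deriving DecidableEq

/-- Satisfaction of a block of trace quantifiers followed by a matrix `P`,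
over a set `L` of traces, starting from the assignment `Δ`. -/
def SatPfx {AP V : Type} [DecidableEq V] (L : Set (Trace AP)) :
    List (Quant × V) → (PTA AP V → Prop) → PTA AP V → Prop
  | [], P, Δ => P Δ
  | (Quant.ex, x) :: qs, P, Δ => ∃ π ∈ L, SatPfx L qs P (Function.update Δ x (π, 0))
  | (Quant.all, x) :: qs, P, Δ => ∀ π ∈ L, SatPfx L qs P (Function.update Δ x (π, 0))

/-- A HyperLTL_S sentence: a quantifier prefix and a quantifier-free matrix. -/
structure HSSentence (AP V : Type) : Type where
  pre : List (Quant × V)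
  matrix : HSQF AP V

/-- The sentence is closed: quantified variables are pairwise distinct and
every trace variable of the matrix is bound by the prefix. -/
def HSSentence.Closed {AP V : Type} (φ : HSSentence AP V) : Prop :=
  (φ.pre.map Prod.snd).Nodup ∧ ∀ x ∈ φ.matrix.vars, x ∈ φ.pre.map Prod.snd

/-- `L ⊨ φ` for a HyperLTL_S sentence `φ` and a set `L` of traces. -/
def HSSentence.Models {AP V : Type} [DecidableEq V] (φ : HSSentence AP V)
    (L : Set (Trace AP)) : Prop :=
  ∀ Δ₀ : PTA AP V, SatPfx L φ.pre (fun Δ => φ.matrix.Sat Δ) Δ₀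

/-- A simple HyperLTL_S sentence: its matrix is a Boolean combination of
HyperLTL_S[Γ] formulas (for a common finite set `Γ` of LTL formulas) and of
one-variable quantifier-free formulas. -/
def HSSentence.Simple {AP V : Type} (φ : HSSentence AP V) : Prop :=
  ∃ Γ : Finset (LTL AP),
    BoolCombOf (fun ψ => ψ.InFragment Γ ∨ ψ.OneVar) φ.matrix

/-- A Kripke structure over `AP` with state type `S`. -/
structure Kripke (AP S : Type) : Type where
  init : Set S
  E : Set (S × S)
  total : ∀ s : S, ∃ t : S, (s, t) ∈ E
  V : S → Set AP

namespace Kripke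

/-- A path of a Kripke structure. -/
def IsPath {AP S : Type} (K : Kripke AP S) (ν : ℕ → S) : Prop :=
  ν 0 ∈ K.init ∧ ∀ i : ℕ, (ν i, ν (i + 1)) ∈ K.E

/-- The set of traces of a Kripke structure. -/
def Lang {AP S : Type} (K : Kripke AP S) : Set (Trace AP) :=
  {π | ∃ ν : ℕ → S, K.IsPath ν ∧ π = fun i => K.V (ν i)}

/-- The set of traces of `F`-fair paths of a Kripke structure. -/
def FairLang {AP S : Type} (K : Kripke AP S) (F : Set S) : Set (Trace AP) :=
  {π | ∃ ν : ℕ → S, K.IsPath ν ∧ (∀ N : ℕ, ∃ i, N ≤ i ∧ ν i ∈ F) ∧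
        π = fun i => K.V (ν i)}

end Kripke

/-- A finite Kripke structure over `AP` (states are `Fin n`). -/
structure FinKripke (AP : Type) : Type where
  n : ℕ
  K : Kripke AP (Fin n)

def FinKripke.Lang {AP : Type} (K : FinKripke AP) : Set (Trace AP) := K.K.Lang

def FinKripke.FairLang {AP : Type} (K : FinKripke AP) (F : Set (Fin K.n)) :
    Set (Trace AP) := K.K.FairLang F

/-- A nondeterministic Büchi automaton over alphabet `Sig` (finitely many states). -/
structure NBA (Sig : Type) : Type where
  n : ℕ
  init : Set (Fin n)
  trans : Set (Fin n × Sig × Fin n)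
  acc : Set (Fin n)

/-- The ω-language of an NBA. -/
def NBA.Lang {Sig : Type} (A : NBA Sig) : Set (ℕ → Sig) :=
  {w | ∃ ρ : ℕ → Fin A.n, ρ 0 ∈ A.init ∧ (∀ i : ℕ, (ρ i, w i, ρ (i + 1)) ∈ A.trans) ∧
        ∀ N : ℕ, ∃ i, N ≤ i ∧ ρ i ∈ A.acc}

/-- Positive Boolean formulas over `X`. -/
inductive PosBool (X : Type) : Type where
  | tt   : PosBool X
  | ff   : PosBool X
  | var  : X → PosBool X
  | por  : PosBool X → PosBool X → PosBool X
  | pand : PosBool X → PosBool X → PosBool X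

/-- Satisfaction of a positive Boolean formula by a set of variables. -/
def PosBool.SatBy {X : Type} (S : Set X) : PosBool X → Prop
  | .tt => True
  | .ff => False
  | .var x => x ∈ S
  | .por a b => a.SatBy S ∨ b.SatBy S
  | .pand a b => a.SatBy S ∧ b.SatBy S

/-- A Büchi alternating asynchronous word automaton with `m` directions (an `mAAWA`)
over alphabet `Sig`, with finitely many states. -/
structure AAWA (Sig : Type) (m : ℕ) : Type where
  n : ℕ
  init : Fin n
  trans : Fin n → (Fin m → Sig) → PosBool (Fin n × Fin m)
  acc : Set (Fin n)

/-- A run of an `mAAWA` over an `m`-tuple of infinite words: a `(Q × ℕ^m)`-labeled tree. -/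
structure AAWARun {Sig : Type} {m : ℕ} (A : AAWA Sig m) (w : Fin m → (ℕ → Sig)) : Type where
  T : Set (List ℕ)
  Lab : List ℕ → Fin A.n × (Fin m → ℕ)
  rootMem : [] ∈ T
  pclosed : ∀ τ ∈ T, ∀ σ : List ℕ, σ <+: τ → σ ∈ T
  rootLab : Lab [] = (A.init, fun _ => 0)
  step : ∀ τ ∈ T, ∃ (k : ℕ) (c : Fin k → Fin A.n × Fin m),
      (A.trans (Lab τ).1 (fun d => w d ((Lab τ).2 d))).SatBy (Set.range c) ∧
      (∀ j : ℕ, τ ++ [j] ∈ T ↔ j < k) ∧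
      ∀ j : Fin k, Lab (τ ++ [j.1]) =
        ((c j).1, fun d => if d = (c j).2 then (Lab τ).2 d + 1 else (Lab τ).2 d)

/-- The node of a branch at depth `i`. -/
def branchPrefix (b : ℕ → ℕ) (i : ℕ) : List ℕ := (List.range i).map b

/-- `b` describes an infinite branch of the run tree. -/
def AAWARun.IsBranch {Sig : Type} {m : ℕ} {A : AAWA Sig m} {w : Fin m → (ℕ → Sig)}
    (r : AAWARun A w) (b : ℕ → ℕ) : Prop :=
  ∀ i : ℕ, branchPrefix b i ∈ r.T

/-- A run is accepting if every infinite branch visits accepting states infinitely often. -/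
def AAWARun.Accepting {Sig : Type} {m : ℕ} {A : AAWA Sig m} {w : Fin m → (ℕ → Sig)}
    (r : AAWARun A w) : Prop :=
  ∀ b : ℕ → ℕ, r.IsBranch b → ∀ N : ℕ, ∃ i, N ≤ i ∧ (r.Lab (branchPrefix b i)).1 ∈ A.acc

/-- The language of an `mAAWA`: the `m`-tuples of infinite words admitting an accepting run. -/
def AAWA.Lang {Sig : Type} {m : ℕ} (A : AAWA Sig m) : Set (Fin m → (ℕ → Sig)) :=
  {w | ∃ r : AAWARun A w, r.Accepting}

/-- `A` is `k`-synchronous: in every run the reading heads stay within distance `k`. -/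
def AAWA.Synchronous {Sig : Type} {m : ℕ} (A : AAWA Sig m) (k : ℕ) : Prop :=
  ∀ (w : Fin m → (ℕ → Sig)) (r : AAWARun A w), ∀ τ ∈ r.T, ∀ d d' : Fin m,
    (r.Lab τ).2 d ≤ (r.Lab τ).2 d' + k

/-- Quantifier-free HyperLTL_C formulas over propositions `AP` and trace variables `V`:
HyperLTL extended with context modalities `⟨C⟩` for nonempty sets `C` of trace variables. -/
inductive HCQF (AP V : Type) : Type where
  | tt   : HCQF AP V
  | atom : AP → V → HCQF AP V
  | neg  : HCQF AP V → HCQF AP V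
  | conj : HCQF AP V → HCQF AP V → HCQF AP V
  | next : HCQF AP V → HCQF AP V
  | untl : HCQF AP V → HCQF AP V → HCQF AP V
  | ctx  : (C : Set V) → C.Nonempty → HCQF AP V → HCQF AP V

/-- `Δ +_C i` : advance by `i` the positions of the pointed traces assigned to
the variables in the context `C`, leaving the others unchanged. -/
noncomputable def shiftA {AP V : Type} (Δ : PTA AP V) (C : Set V) (i : ℕ) : PTA AP V :=
  fun x => if x ∈ C then ((Δ x).1, (Δ x).2 + i) else Δ x

namespace HCQF

/-- Satisfaction `(Δ, C) ⊨ ψ` of a quantifier-free HyperLTL_C formula. -/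
def Sat {AP V : Type} : HCQF AP V → PTA AP V → Set V → Prop
  | tt, _, _ => True
  | atom p x, Δ, _ => p ∈ (Δ x).1 (Δ x).2
  | neg ψ, Δ, C => ¬ Sat ψ Δ C
  | conj a b, Δ, C => Sat a Δ C ∧ Sat b Δ C
  | next ψ, Δ, C => Sat ψ (shiftA Δ C 1) C
  | untl a b, Δ, C => ∃ i : ℕ, Sat b (shiftA Δ C i) C ∧ ∀ k < i, Sat a (shiftA Δ C k) C
  | ctx C' _ ψ, Δ, _ => Sat ψ Δ C'

/-- Trace variables occurring in a quantifier-free HyperLTL_C formula. -/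
def vars {AP V : Type} : HCQF AP V → Set V
  | tt => ∅
  | atom _ x => {x}
  | neg ψ => vars ψ
  | conj a b => vars a ∪ vars b
  | next ψ => vars ψ
  | untl a b => vars a ∪ vars b
  | ctx _ _ ψ => vars ψ

/-- The set of subformulas of a quantifier-free HyperLTL_C formula. -/
def subf {AP V : Type} : HCQF AP V → Set (HCQF AP V)
  | tt => {tt}
  | atom p x => {atom p x}
  | neg ψ => insert (neg ψ) (subf ψ)
  | conj a b => insert (conj a b) (subf a ∪ subf b)
  | next ψ => insert (next ψ) (subf ψ)
  | untl a b => insert (untl a b) (subf a ∪ subf b)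
  | ctx C h ψ => insert (ctx C h ψ) (subf ψ)

/-- The size of a formula: its number of distinct subformulas. -/
noncomputable def size {AP V : Type} (ψ : HCQF AP V) : ℕ := ψ.subf.ncard

/-- Nesting depth of context modalities. -/
def ctxDepth {AP V : Type} : HCQF AP V → ℕ
  | tt => 0
  | atom _ _ => 0
  | neg ψ => ctxDepth ψ
  | conj a b => max (ctxDepth a) (ctxDepth b)
  | next ψ => ctxDepth ψ
  | untl a b => max (ctxDepth a) (ctxDepth b)
  | ctx _ _ ψ => ctxDepth ψ + 1

/-- Auxiliary predicate for the bounded fragment. `glob` is the set of all trace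
variables occurring in the formula of interest (a context `C` is global iff
`glob ⊆ C`); the flag records whether the current position is in the scope of a
non-global context modality, where only the temporal modality `X` is allowed. -/
def BoundedAux {AP V : Type} (glob : Set V) : Bool → HCQF AP V → Prop
  | _, tt => True
  | _, atom _ _ => True
  | t, neg ψ => BoundedAux glob t ψ
  | t, conj a b => BoundedAux glob t a ∧ BoundedAux glob t b
  | t, next ψ => BoundedAux glob t ψ
  | false, untl a b => BoundedAux glob false a ∧ BoundedAux glob false b
  | true, untl _ _ => False
  | t, ctx C _ ψ => (glob ⊆ C → BoundedAux glob false ψ) ∧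
                    (¬ glob ⊆ C → BoundedAux glob true ψ)

/-- `ψ` is bounded: the only temporal modality occurring in (the scope of) a
non-global context is the next modality `X`. -/
def IsBounded {AP V : Type} (ψ : HCQF AP V) : Prop := BoundedAux ψ.vars false ψ

/-- Auxiliary predicate for the fragment where each temporal modality occurring in
(the scope of) a non-global context is the eventually modality `F` (i.e. `⊤ U ·`). -/
def FOnlyAux {AP V : Type} (glob : Set V) : Bool → HCQF AP V → Prop
  | _, tt => True
  | _, atom _ _ => True
  | t, neg ψ => FOnlyAux glob t ψ
  | t, conj a b => FOnlyAux glob t a ∧ FOnlyAux glob t b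
  | false, next ψ => FOnlyAux glob false ψ
  | true, next _ => False
  | false, untl a b => FOnlyAux glob false a ∧ FOnlyAux glob false b
  | true, untl a b => a = tt ∧ FOnlyAux glob true b
  | t, ctx C _ ψ => (glob ⊆ C → FOnlyAux glob false ψ) ∧
                    (¬ glob ⊆ C → FOnlyAux glob true ψ)

/-- Every temporal modality occurring in the scope of a non-global context
modality is the eventually modality `F`. -/
def FOnlyInNonGlobal {AP V : Type} (glob : Set V) (ψ : HCQF AP V) : Prop :=
  FOnlyAux glob false ψ

end HCQF

/-- A HyperLTL_C sentence: a quantifier prefix and a quantifier-free matrix. -/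
structure HCSentence (AP V : Type) : Type where
  pre : List (Quant × V)
  matrix : HCQF AP V

/-- The sentence is closed: quantified variables are pairwise distinct and every
trace variable of the matrix is bound by the prefix. -/
def HCSentence.Closed {AP V : Type} (φ : HCSentence AP V) : Prop :=
  (φ.pre.map Prod.snd).Nodup ∧ ∀ x ∈ φ.matrix.vars, x ∈ φ.pre.map Prod.snd

/-- `L ⊨ φ` for a HyperLTL_C sentence `φ` and a set `L` of traces
(the matrix is evaluated in the global context `VAR`). -/
def HCSentence.Models {AP V : Type} [DecidableEq V] (φ : HCSentence AP V)
    (L : Set (Trace AP)) : Prop :=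
  ∀ Δ₀ : PTA AP V, SatPfx L φ.pre (fun Δ => φ.matrix.Sat Δ Set.univ) Δ₀

/-- An instance of Post's Correspondence Problem over the alphabet `A`:
`2 * n` nonempty finite words. -/
structure PCPInstance (A : Type) : Type where
  n : ℕ
  npos : 0 < n
  word : Fin 2 → Fin n → List A
  ne : ∀ (ℓ : Fin 2) (i : Fin n), word ℓ i ≠ []

/-- The PCP instance has a solution. -/
def PCPInstance.HasSolution {A : Type} (P : PCPInstance A) : Prop :=
  ∃ is : List (Fin P.n), is ≠ [] ∧
    (is.map (P.word 0)).flatten = (is.map (P.word 1)).flatten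

/-- Atomic propositions used in the PCP reduction:
`AP = Σ ∪ {#} ∪ {p₁,…,pₙ} ∪ {q₁,q₂}`. -/
inductive PCPAP (A : Type) (n : ℕ) : Type where
  | sym  : A → PCPAP A n
  | hash : PCPAP A n
  | pvar : Fin n → PCPAP A n
  | qvar : Fin 2 → PCPAP A n
deriving DecidableEq

/-- `[u, p_i, q_ℓ]` : the word `u` marked with `p_i` and `q_ℓ`, whose last letter is
additionally marked with `#`. -/
def markWord {A : Type} {n : ℕ} (i : Fin n) (ℓ : Fin 2) : List A → List (Set (PCPAP A n))
  | [] => []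
  | [a] => [{PCPAP.sym a, PCPAP.pvar i, PCPAP.qvar ℓ, PCPAP.hash}]
  | a :: b :: rest => ({PCPAP.sym a, PCPAP.pvar i, PCPAP.qvar ℓ} : Set (PCPAP A n)) ::
      markWord i ℓ (b :: rest)

/-- The trace consisting of the finite word `l` followed by the trace `tail`. -/
def listToTrace {A : Type} (l : List (Set A)) (tail : Trace A) : Trace A :=
  fun k => if h : k < l.length then l.get ⟨k, h⟩ else tail (k - l.length)

/-- The well-formed trace `π^ℓ_{i₁,…,i_k} = {#}·[u^ℓ_{i₁},p_{i₁},q_ℓ]⋯[u^ℓ_{i_k},p_{i_k},q_ℓ]·{#}^ω`. -/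
def wfTrace {A : Type} (P : PCPInstance A) (ℓ : Fin 2) (is : List (Fin P.n)) :
    Trace (PCPAP A P.n) :=
  listToTrace (({PCPAP.hash} : Set (PCPAP A P.n)) ::
      (is.map fun i => markWord i ℓ (P.word ℓ i)).flatten)
    (fun _ => {PCPAP.hash})

/-- A well-formed trace for the PCP instance `P`. -/
def IsWellFormed {A : Type} (P : PCPInstance A) (π : Trace (PCPAP A P.n)) : Prop :=
  ∃ (ℓ : Fin 2) (is : List (Fin P.n)), is ≠ [] ∧ π = wfTrace P ℓ is

/-- The set `Γ = {#, p₁, …, pₙ}` of atomic propositions. -/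
def pcpGammaProp (A : Type) (n : ℕ) : Set (PCPAP A n) :=
  {x | x = PCPAP.hash ∨ ∃ i : Fin n, x = PCPAP.pvar i}

/-- The set `Γ = {#, p₁, …, pₙ}` regarded as a set of LTL formulas. -/
def pcpGammaLTL (A : Type) (n : ℕ) : Set (LTL (PCPAP A n)) :=
  LTL.atom '' pcpGammaProp A n

/-- The set `Γ = {#, p₁, …, pₙ}` as a finite set of LTL formulas. -/
def pcpGammaFinset (A : Type) [DecidableEq A] (n : ℕ) : Finset (LTL (PCPAP A n)) :=
  insert (LTL.atom PCPAP.hash)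
    ((Finset.univ : Finset (Fin n)).image fun i => LTL.atom (PCPAP.pvar i))

/-- Instructions of a Minsky 2-counter machine. -/
inductive MOp : Type where
  | inc  : MOp
  | dec  : MOp
  | zero : MOp
deriving DecidableEq

/-- A Minsky 2-counter machine (locations are `Fin nQ`; no transition leaves the
halting location). -/
structure Minsky : Type where
  nQ : ℕ
  qinit : Fin nQ
  qhalt : Fin nQ
  trans : Set (Fin nQ × (MOp × Fin 2) × Fin nQ)
  halt_no_out : ∀ q op q', (q, op, q') ∈ trans → q ≠ qhalt

/-- The one-step relation between configurations of a Minsky machine. -/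
def Minsky.Step (M : Minsky) (c c' : Fin M.nQ × (Fin 2 → ℕ)) : Prop :=
  ∃ (op : MOp) (cnt : Fin 2), (c.1, (op, cnt), c'.1) ∈ M.trans ∧
    (∀ d : Fin 2, d ≠ cnt → c'.2 d = c.2 d) ∧
    (match op with
      | MOp.inc => c'.2 cnt = c.2 cnt + 1
      | MOp.dec => 0 < c.2 cnt ∧ c'.2 cnt + 1 = c.2 cnt
      | MOp.zero => c.2 cnt = 0 ∧ c'.2 cnt = 0)

/-- The machine halts: some computation from the initial configuration reaches the
halting location. -/
def Minsky.Halts (M : Minsky) : Prop :=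
  ∃ c : Fin M.nQ × (Fin 2 → ℕ),
    Relation.ReflTransGen M.Step (M.qinit, fun _ => 0) c ∧ c.1 = M.qhalt

/-- Projection of a trace over `AP ⊕ B` onto `AP`. -/
def projSum {AP B : Type} (w : Trace (AP ⊕ B)) : Trace AP :=
  fun i => {p | Sum.inl p ∈ w i}

/-- The proposition `at(θ)` associated with an LTL formula (`at(p) = p` for atoms). -/
def atProp {AP : Type} : LTL AP → AP ⊕ LTL AP
  | LTL.atom p => Sum.inl p
  | θ => Sum.inr θ


section VW
open scoped Classical
variable {AP : Type} [DecidableEq AP]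

lemma LTL.mem_subf_self (θ : LTL AP) : θ ∈ LTL.subf θ := by
  cases θ <;> simp [LTL.subf]

lemma LTL.subf_trans : ∀ θ φ : LTL AP, φ ∈ LTL.subf θ → LTL.subf φ ⊆ LTL.subf θ := by
  intro θ
  induction θ with
  | tt => intro φ h; simp [LTL.subf] at h; subst h; simp [LTL.subf]
  | atom p => intro φ h; simp [LTL.subf] at h; subst h; simp [LTL.subf]
  | neg a ih =>
    intro φ h
    simp only [LTL.subf, Finset.mem_insert] at h
    rcases h with h | h
    · subst h; exact fun x hx => hx
    · exact (ih φ h).trans (Finset.subset_insert _ _)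
  | conj a b iha ihb =>
    intro φ h
    simp only [LTL.subf, Finset.mem_insert, Finset.mem_union] at h
    rcases h with h | h | h
    · subst h; exact fun x hx => hx
    · exact (iha φ h).trans ((Finset.subset_union_left).trans (Finset.subset_insert _ _))
    · exact (ihb φ h).trans ((Finset.subset_union_right).trans (Finset.subset_insert _ _))
  | next a ih =>
    intro φ h
    simp only [LTL.subf, Finset.mem_insert] at h
    rcases h with h | h
    · subst h; exact fun x hx => hx
    · exact (ih φ h).trans (Finset.subset_insert _ _)
  | untl a b iha ihb =>
    intro φ h
    simp only [LTL.subf, Finset.mem_insert, Finset.mem_union] at h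
    rcases h with h | h | h
    · subst h; exact fun x hx => hx
    · exact (iha φ h).trans ((Finset.subset_union_left).trans (Finset.subset_insert _ _))
    · exact (ihb φ h).trans ((Finset.subset_union_right).trans (Finset.subset_insert _ _))

variable (Γ : Finset (LTL AP))

/-- The subformula part of the closure. -/
def SGam : Finset (LTL AP) := Γ.biUnion LTL.subf

lemma SGam_closed {θ φ : LTL AP} (hθ : θ ∈ SGam Γ) (hφ : φ ∈ LTL.subf θ) :
    φ ∈ SGam Γ := by
  simp only [SGam, Finset.mem_biUnion] at hθ ⊢
  obtain ⟨ψ, hψ, hsub⟩ := hθ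
  exact ⟨ψ, hψ, LTL.subf_trans ψ θ hsub hφ⟩

lemma SGam_sub_cl : SGam Γ ⊆ clOf Γ := Finset.subset_union_left

lemma cl_cases {θ : LTL AP} (h : θ ∈ clOf Γ) :
    θ ∈ SGam Γ ∨ ∃ ψ ∈ SGam Γ, θ = LTL.neg ψ := by
  simp only [clOf, Finset.mem_union, Finset.mem_image] at h
  rcases h with h | ⟨ψ, hψ, hneg⟩
  · exact Or.inl h
  · cases ψ with
    | neg a =>
      left
      have : a ∈ LTL.subf (LTL.neg a) := by
        simp [LTL.subf, LTL.mem_subf_self]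
      have := SGam_closed Γ hψ this
      simpa [LTL.negId] using hneg ▸ this
    | tt => exact Or.inr ⟨_, hψ, hneg.symm⟩
    | atom p => exact Or.inr ⟨_, hψ, hneg.symm⟩
    | conj a b => exact Or.inr ⟨_, hψ, hneg.symm⟩
    | next a => exact Or.inr ⟨_, hψ, hneg.symm⟩
    | untl a b => exact Or.inr ⟨_, hψ, hneg.symm⟩

lemma cl_neg {a : LTL AP} (h : LTL.neg a ∈ clOf Γ) : a ∈ clOf Γ := by
  rcases cl_cases Γ h with h | ⟨ψ, hψ, heq⟩
  · exact SGam_sub_cl Γ (SGam_closed Γ h (by simp [LTL.subf, LTL.mem_subf_self]))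
  · cases heq; exact SGam_sub_cl Γ hψ

lemma cl_conj {a b : LTL AP} (h : LTL.conj a b ∈ clOf Γ) :
    a ∈ clOf Γ ∧ b ∈ clOf Γ := by
  rcases cl_cases Γ h with h | ⟨ψ, hψ, heq⟩
  · constructor <;>
      exact SGam_sub_cl Γ (SGam_closed Γ h (by simp [LTL.subf, LTL.mem_subf_self]))
  · cases heq

lemma cl_next {a : LTL AP} (h : LTL.next a ∈ clOf Γ) : a ∈ clOf Γ := by
  rcases cl_cases Γ h with h | ⟨ψ, hψ, heq⟩
  · exact SGam_sub_cl Γ (SGam_closed Γ h (by simp [LTL.subf, LTL.mem_subf_self]))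
  · cases heq

lemma cl_untl {a b : LTL AP} (h : LTL.untl a b ∈ clOf Γ) :
    a ∈ clOf Γ ∧ b ∈ clOf Γ := by
  rcases cl_cases Γ h with h | ⟨ψ, hψ, heq⟩
  · constructor <;>
      exact SGam_sub_cl Γ (SGam_closed Γ h (by simp [LTL.subf, LTL.mem_subf_self]))
  · cases heq

end VW

section VW2
open scoped Classical
variable {AP : Type} [DecidableEq AP]

lemma atProp_inj : Function.Injective (atProp (AP := AP)) := by
  intro a b h
  cases a <;> cases b <;> simp_all [atProp]

lemma sat_untl_iff (a b : LTL AP) (π : Trace AP) (i : ℕ) :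
    (LTL.untl a b).Sat π i ↔
      b.Sat π i ∨ (a.Sat π i ∧ (LTL.untl a b).Sat π (i + 1)) := by
  constructor
  · rintro ⟨j, hij, hb, hmin⟩
    rcases eq_or_lt_of_le hij with rfl | hlt
    · exact Or.inl hb
    · refine Or.inr ⟨hmin i le_rfl hlt, j, hlt, hb, fun k hk1 hk2 => hmin k (by omega) hk2⟩
  · rintro (hb | ⟨ha, j, hj, hb, hmin⟩)
    · exact ⟨i, le_rfl, hb, fun k h1 h2 => absurd h1 (by omega)⟩
    · refine ⟨j, by omega, hb, fun k h1 h2 => ?_⟩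
      rcases eq_or_lt_of_le h1 with rfl | h
      · exact ha
      · exact hmin k (by omega) h2

variable (Γ : Finset (LTL AP))

/-- Marking of a letter: formulas of the closure claimed true at this letter. -/
noncomputable def mkM (σ : Set (AP ⊕ LTL AP)) : Finset (LTL AP) :=
  (clOf Γ).filter (fun θ => atProp θ ∈ σ)

lemma mem_mkM {σ : Set (AP ⊕ LTL AP)} {θ : LTL AP} :
    θ ∈ mkM Γ σ ↔ θ ∈ clOf Γ ∧ atProp θ ∈ σ := by simp [mkM]

/-- Until formulas of the closure. -/
noncomputable def UsG : Finset (LTL AP) :=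
  (clOf Γ).filter (fun θ => ∃ a b, θ = LTL.untl a b)

/-- Büchi condition for an until formula at a marking. -/
def condU : LTL AP → Finset (LTL AP) → Prop
  | LTL.untl a b, M => LTL.untl a b ∉ M ∨ b ∈ M
  | _, _ => True

/-- Update of the pending-untils bookkeeping component. -/
noncomputable def updF (M F : Finset (LTL AP)) : Finset (LTL AP) :=
  (if F = UsG Γ then ∅ else F) ∪ (UsG Γ).filter (fun u => condU u M)

lemma updF_sub {M F : Finset (LTL AP)} (h : F ⊆ UsG Γ) : updF Γ M F ⊆ UsG Γ := by
  unfold updF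
  apply Finset.union_subset
  · split <;> simp [h]
  · exact Finset.filter_subset _ _

def LocalOK (M : Finset (LTL AP)) : Prop :=
  (LTL.tt ∈ clOf Γ → LTL.tt ∈ M) ∧
  (∀ a, LTL.neg a ∈ clOf Γ → (LTL.neg a ∈ M ↔ a ∉ M)) ∧
  (∀ a b, LTL.conj a b ∈ clOf Γ → (LTL.conj a b ∈ M ↔ a ∈ M ∧ b ∈ M))

def PairOK (M M' : Finset (LTL AP)) : Prop :=
  (∀ a, LTL.next a ∈ clOf Γ → (LTL.next a ∈ M ↔ a ∈ M')) ∧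
  (∀ a b, LTL.untl a b ∈ clOf Γ →
    (LTL.untl a b ∈ M ↔ b ∈ M ∨ (a ∈ M ∧ LTL.untl a b ∈ M')))

/-- State space of the automaton. -/
abbrev StG : Type := (↥((clOf Γ).powerset)) × (↥((UsG Γ).powerset))

/-- Transition condition. -/
noncomputable def CondG (s : StG Γ) (σ : Set (AP ⊕ LTL AP)) (s' : StG Γ) : Prop :=
  s.1.1 = mkM Γ σ ∧ LocalOK Γ s.1.1 ∧ PairOK Γ s.1.1 s'.1.1 ∧
  s'.2.1 = updF Γ s'.1.1 s.2.1

end VW2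

section VW3
open scoped Classical
set_option linter.unusedSectionVars false
variable {AP : Type} [DecidableEq AP] (Γ : Finset (LTL AP))

/-- Propagation of unfulfilled untils along a locally consistent marking sequence. -/
lemma untl_propagate (M : ℕ → Finset (LTL AP))
    (hP : ∀ i, PairOK Γ (M i) (M (i + 1)))
    (a b : LTL AP) (hu : LTL.untl a b ∈ clOf Γ)
    (i : ℕ) (hmem : LTL.untl a b ∈ M i) :
    ∀ j, i ≤ j → (∀ k, i ≤ k → k < j → b ∉ M k) →
      LTL.untl a b ∈ M j ∧ ∀ k, i ≤ k → k < j → a ∈ M k := by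
  intro j hij
  induction j, hij using Nat.le_induction with
  | base => exact fun _ => ⟨hmem, fun k h1 h2 => absurd h1 (by omega)⟩
  | succ j hij ih =>
    intro hnb
    obtain ⟨hj, hak⟩ := ih (fun k h1 h2 => hnb k h1 (by omega))
    have hbj : b ∉ M j := hnb j hij (by omega)
    have := ((hP j).2 a b hu).mp hj
    rcases this with h | ⟨ha, hnext⟩
    · exact absurd h hbj
    · refine ⟨hnext, fun k h1 h2 => ?_⟩
      rcases Nat.lt_or_ge k j with h | h
      · exact hak k h1 h
      · have : k = j := by omega
        subst this; exact ha

/-- Main soundness lemma: markings coincide with satisfaction. -/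
lemma runs_correct (w : ℕ → Set (AP ⊕ LTL AP)) (M : ℕ → Finset (LTL AP))
    (hM : ∀ i, M i = mkM Γ (w i))
    (hL : ∀ i, LocalOK Γ (M i))
    (hP : ∀ i, PairOK Γ (M i) (M (i + 1)))
    (hfair : ∀ u ∈ UsG Γ, ∀ N, ∃ i, N ≤ i ∧ condU u (M i)) :
    ∀ θ : LTL AP, θ ∈ clOf Γ → ∀ i, (θ ∈ M i ↔ θ.Sat (projSum w) i) := by
  intro θ
  induction θ with
  | tt => intro h i; simpa [LTL.Sat] using (hL i).1 h
  | atom p =>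
    intro h i
    rw [hM i]
    simp [mem_mkM, h, LTL.Sat, projSum, atProp]
  | neg a ih =>
    intro h i
    have ha := cl_neg Γ h
    rw [(hL i).2.1 a h, LTL.Sat, ih ha i]
  | conj a b iha ihb =>
    intro h i
    obtain ⟨ha, hb⟩ := cl_conj Γ h
    rw [(hL i).2.2 a b h, LTL.Sat, iha ha i, ihb hb i]
  | next a ih =>
    intro h i
    have ha := cl_next Γ h
    rw [(hP i).1 a h, LTL.Sat, ih ha (i + 1)]
  | untl a b iha ihb =>
    intro h i
    obtain ⟨ha, hb⟩ := cl_untl Γ h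
    have hUs : LTL.untl a b ∈ UsG Γ := by
      simp [UsG, h]
    constructor
    · intro hmem
      -- get a fairness point
      obtain ⟨j0, hij0, hcond⟩ := hfair _ hUs i
      simp only [condU] at hcond
      -- there is some k in [i, j0] with b ∈ M k
      have hexb : ∃ k, (i ≤ k ∧ b ∈ M k) := by
        by_contra hno
        push_neg at hno
        obtain ⟨hj, _⟩ := untl_propagate Γ M hP a b h i hmem j0 hij0
          (fun k h1 _ => hno k h1)
        rcases hcond with hc | hc
        · exact hc hj
        · exact hno j0 hij0 hc
      -- take the least such k
      have hspec := Nat.find_spec hexb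
      set k0 := Nat.find hexb with hk0
      have hminb : ∀ k, i ≤ k → k < k0 → b ∉ M k :=
        fun k h1 h2 hb' => Nat.find_min hexb h2 ⟨h1, hb'⟩
      obtain ⟨_, haks⟩ := untl_propagate Γ M hP a b h i hmem k0 hspec.1 hminb
      exact ⟨k0, hspec.1, (ihb hb k0).mp hspec.2,
        fun k h1 h2 => (iha ha k).mp (haks k h1 h2)⟩
    · intro hsat
      obtain ⟨j, hij, hbj, hak⟩ := hsat
      -- downward induction on j - i
      have key : ∀ d i', b.Sat (projSum w) (i' + d) →
          (∀ k, i' ≤ k → k < i' + d → a.Sat (projSum w) k) →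
          LTL.untl a b ∈ M i' := by
        intro d
        induction d with
        | zero =>
          intro i' hb' _
          exact ((hP i').2 a b h).mpr (Or.inl ((ihb hb i').mpr (by simpa using hb')))
        | succ d ihd =>
          intro i' hb' hak'
          have h1 : LTL.untl a b ∈ M (i' + 1) := by
            apply ihd (i' + 1)
            · have : i' + 1 + d = i' + (d + 1) := by omega
              rw [this]; exact hb'
            · intro k h1 h2; exact hak' k (by omega) (by omega)
          have h2 : a ∈ M i' := (iha ha i').mpr (hak' i' le_rfl (by omega))
          exact ((hP i').2 a b h).mpr (Or.inr ⟨h2, h1⟩)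
      have : j = i + (j - i) := by omega
      exact key (j - i) i (by rw [← this]; exact hbj)
        (fun k h1 h2 => hak k h1 (by omega))

end VW3

section VW4
open scoped Classical
set_option linter.unusedSectionVars false
variable {AP : Type} [DecidableEq AP] (Γ : Finset (LTL AP))

/-- From Büchi acceptance of the `F`-component, extract fairness of every until. -/
lemma fair_of_acc (M F : ℕ → Finset (LTL AP))
    (hrec : ∀ i, F (i + 1) = updF Γ (M (i + 1)) (F i))
    (hacc : ∀ N, ∃ i, N ≤ i ∧ F i = UsG Γ) :
    ∀ u ∈ UsG Γ, ∀ N, ∃ i, N ≤ i ∧ condU u (M i) := by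
  intro u hu N
  by_contra hno
  push_neg at hno
  obtain ⟨t, hNt, ht⟩ := hacc N
  have hnot : ∀ s, t + 1 ≤ s → u ∉ F s := by
    intro s hs
    induction s, hs using Nat.le_induction with
    | base =>
      rw [hrec t, updF, if_pos ht]
      simp only [Finset.empty_union, Finset.mem_filter]
      rintro ⟨-, hc⟩
      exact hno (t + 1) (by omega) hc
    | succ s hs ih =>
      rw [hrec s, updF]
      simp only [Finset.mem_union, Finset.mem_filter]
      rintro (h | ⟨-, hc⟩)
      · split at h
        · simp at h
        · exact ih h
      · exact hno (s + 1) (by omega) hc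
  obtain ⟨s, hs, hFs⟩ := hacc (t + 1)
  exact hnot s hs (hFs ▸ hu)

/-- From fairness of every until, the `F`-component reaches `UsG Γ` infinitely often. -/
lemma acc_of_fair (M F : ℕ → Finset (LTL AP))
    (hrec : ∀ i, F (i + 1) = updF Γ (M (i + 1)) (F i))
    (hF0 : F 0 ⊆ UsG Γ)
    (hfair : ∀ u ∈ UsG Γ, ∀ N, ∃ i, N ≤ i ∧ condU u (M i)) :
    ∀ N, ∃ i, N ≤ i ∧ F i = UsG Γ := by
  have hsub : ∀ i, F i ⊆ UsG Γ := by
    intro i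
    induction i with
    | zero => exact hF0
    | succ i ih => rw [hrec i]; exact updF_sub Γ ih
  intro N
  by_contra hno
  push_neg at hno
  -- monotonicity after N
  have hmono : ∀ i j, N ≤ i → i ≤ j → F i ⊆ F j := by
    intro i j hNi hij
    induction j, hij using Nat.le_induction with
    | base => exact subset_rfl
    | succ j hij ih =>
      refine ih.trans ?_
      rw [hrec j, updF, if_neg (hno j (by omega))]
      exact Finset.subset_union_left
  -- each u eventually enters F
  have hget : ∀ u ∈ UsG Γ, ∀ N', N ≤ N' → ∃ i, N' ≤ i ∧ u ∈ F i := by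
    intro u hu N' hNN'
    obtain ⟨i, hi, hc⟩ := hfair u hu (N' + 1)
    obtain ⟨j, rfl⟩ : ∃ j, i = j + 1 := ⟨i - 1, by omega⟩
    refine ⟨j + 1, by omega, ?_⟩
    rw [hrec j, updF]
    exact Finset.mem_union_right _ (Finset.mem_filter.mpr ⟨hu, hc⟩)
  -- accumulate over the finite set UsG Γ
  have hall : ∀ T : Finset (LTL AP), T ⊆ UsG Γ → ∃ I, N ≤ I ∧ T ⊆ F I := by
    intro T hT
    induction T using Finset.induction with
    | empty => exact ⟨N, le_rfl, by simp⟩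
    | @insert u T hu ih =>
      obtain ⟨I, hNI, hTI⟩ := ih (fun x hx => hT (Finset.mem_insert_of_mem hx))
      obtain ⟨I', hII', huI'⟩ := hget u (hT (Finset.mem_insert_self _ _)) I hNI
      exact ⟨I', by omega, Finset.insert_subset huI'
        (hTI.trans (hmono I I' hNI hII'))⟩
  obtain ⟨I, hNI, hUI⟩ := hall (UsG Γ) le_rfl
  exact hno I hNI (le_antisymm (hsub I) hUI)

end VW4

section VW5
open scoped Classical
set_option linter.unusedSectionVars false
variable {AP : Type} [DecidableEq AP] (Γ : Finset (LTL AP))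

/-- The bookkeeping sequence. -/
noncomputable def Fseq (M : ℕ → Finset (LTL AP)) : ℕ → Finset (LTL AP)
  | 0 => ∅
  | n + 1 => updF Γ (M (n + 1)) (Fseq M n)


end VW5

theorem stmt8 (AP : Type) [Fintype AP] [DecidableEq AP] (Γ : Finset (LTL AP))
    (hAP : ∀ p : AP, LTL.atom p ∈ clOf Γ) :
    ∃ A : NBA (Set (AP ⊕ LTL AP)),
      (∀ w ∈ A.Lang, ∀ (i : ℕ) (θ : LTL AP), θ ∈ clOf Γ →
        (atProp θ ∈ w i ↔ θ.Sat (projSum w) i)) ∧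
      (∀ π : Trace AP, ∃ w ∈ A.Lang, projSum w = π) := by
  classical
  let e := Fintype.equivFin (StG Γ)
  refine ⟨⟨Fintype.card (StG Γ),
    {s | ((e.symm s).2 : Finset (LTL AP)) = ∅},
    {t | CondG Γ (e.symm t.1) t.2.1 (e.symm t.2.2)},
    {s | ((e.symm s).2 : Finset (LTL AP)) = UsG Γ}⟩, ?_, ?_⟩
  · rintro w ⟨ρ, hinit, htrans, hBuchi⟩ i θ hθ
    set M : ℕ → Finset (LTL AP) := fun i => ((e.symm (ρ i)).1 : Finset (LTL AP)) with hMdef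
    set F : ℕ → Finset (LTL AP) := fun i => ((e.symm (ρ i)).2 : Finset (LTL AP)) with hFdef
    have hc : ∀ i, CondG Γ (e.symm (ρ i)) (w i) (e.symm (ρ (i + 1))) := htrans
    have hM : ∀ i, M i = mkM Γ (w i) := fun i => (hc i).1
    have hL : ∀ i, LocalOK Γ (M i) := fun i => (hc i).2.1
    have hP : ∀ i, PairOK Γ (M i) (M (i + 1)) := fun i => (hc i).2.2.1
    have hrec : ∀ i, F (i + 1) = updF Γ (M (i + 1)) (F i) := fun i => (hc i).2.2.2
    have hacc : ∀ N, ∃ i, N ≤ i ∧ F i = UsG Γ := fun N => hBuchi N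
    have hfair := fair_of_acc Γ M F hrec hacc
    have hcorrect := runs_correct Γ w M hM hL hP hfair θ hθ i
    rw [← hcorrect, hM i]
    simp [mkM, hθ]
  · intro π
    set w : Trace (AP ⊕ LTL AP) :=
      fun i => {x | ∃ θ : LTL AP, θ ∈ clOf Γ ∧ atProp θ = x ∧ θ.Sat π i} with hw
    have hkey : ∀ θ ∈ clOf Γ, ∀ i, (atProp θ ∈ w i ↔ θ.Sat π i) := by
      intro θ hθ i
      constructor
      · rintro ⟨θ', hθ', heq, hs⟩
        rwa [atProp_inj heq] at hs
      · intro hs; exact ⟨θ, hθ, rfl, hs⟩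
    have hproj : projSum w = π := by
      funext i; ext p
      simp only [projSum, Set.mem_setOf_eq, hw]
      constructor
      · rintro ⟨θ', hθ', heq, hs⟩
        have : θ' = LTL.atom p := atProp_inj (heq.trans rfl)
        subst this; exact hs
      · intro hp; exact ⟨LTL.atom p, hAP p, rfl, hp⟩
    set M : ℕ → Finset (LTL AP) :=
      fun i => (clOf Γ).filter (fun θ => θ.Sat π i) with hMdef
    have hMmem : ∀ θ i, θ ∈ M i ↔ θ ∈ clOf Γ ∧ θ.Sat π i := by
      intro θ i; simp [hMdef]
    have hMmk : ∀ i, M i = mkM Γ (w i) := by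
      intro i; ext θ
      rw [hMmem, mem_mkM]
      exact ⟨fun ⟨h1, h2⟩ => ⟨h1, (hkey θ h1 i).mpr h2⟩,
        fun ⟨h1, h2⟩ => ⟨h1, (hkey θ h1 i).mp h2⟩⟩
    have hrec : ∀ i, Fseq Γ M (i + 1) = updF Γ (M (i + 1)) (Fseq Γ M i) := fun i => rfl
    have hFsub : ∀ i, Fseq Γ M i ⊆ UsG Γ := by
      intro i; induction i with
      | zero => simp [Fseq]
      | succ i ih => rw [hrec i]; exact updF_sub Γ ih
    have hLi : ∀ i, LocalOK Γ (M i) := by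
      intro i
      refine ⟨fun h => ?_, fun a h => ?_, fun a b h => ?_⟩
      · rw [hMmem]; exact ⟨h, trivial⟩
      · have ha := cl_neg Γ h
        rw [hMmem, hMmem]
        simp [h, ha, LTL.Sat]
      · obtain ⟨ha, hb⟩ := cl_conj Γ h
        rw [hMmem, hMmem, hMmem]
        simp [h, ha, hb, LTL.Sat]
    have hPi : ∀ i, PairOK Γ (M i) (M (i + 1)) := by
      intro i
      constructor
      · intro a h
        have ha := cl_next Γ h
        rw [hMmem, hMmem]
        simp [h, ha, LTL.Sat]
      · intro a b h
        obtain ⟨ha, hb⟩ := cl_untl Γ h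
        rw [hMmem, hMmem, hMmem, hMmem]
        simp only [h, ha, hb, true_and]
        exact sat_untl_iff a b π i
    have hfairsem : ∀ u ∈ UsG Γ, ∀ N, ∃ i, N ≤ i ∧ condU u (M i) := by
      intro u hu N
      obtain ⟨hcl, a, b, rfl⟩ : u ∈ clOf Γ ∧ ∃ a b, u = LTL.untl a b := by
        simpa [UsG] using hu
      by_cases hs : (LTL.untl a b).Sat π N
      · obtain ⟨j, hj, hbj, -⟩ := hs
        refine ⟨j, hj, Or.inr ?_⟩
        rw [hMmem]
        exact ⟨(cl_untl Γ hcl).2, hbj⟩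
      · refine ⟨N, le_rfl, Or.inl ?_⟩
        rw [hMmem]
        exact fun ⟨_, h2⟩ => hs h2
    set ρ : ℕ → Fin (Fintype.card (StG Γ)) := fun i =>
      e (⟨M i, Finset.mem_powerset.mpr (Finset.filter_subset _ _)⟩,
         ⟨Fseq Γ M i, Finset.mem_powerset.mpr (hFsub i)⟩) with hρ
    refine ⟨w, ⟨ρ, ?_, ?_, ?_⟩, hproj⟩
    · show ((e.symm (ρ 0)).2 : Finset (LTL AP)) = ∅
      rw [hρ]; simp [Fseq]
    · intro i
      show CondG Γ (e.symm (ρ i)) (w i) (e.symm (ρ (i + 1)))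
      rw [hρ]
      simp only [Equiv.symm_apply_apply]
      exact ⟨hMmk i, hLi i, hPi i, hrec i⟩
    · intro N
      obtain ⟨i, hi, hFi⟩ := acc_of_fair Γ M (Fseq Γ M) hrec (by simp [Fseq]) hfairsem N
      refine ⟨i, hi, ?_⟩
      show ((e.symm (ρ i)).2 : Finset (LTL AP)) = UsG Γ
      rw [hρ]; simpa using hFi
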